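/- Let ξ₁,...,ξ_d be i.i.d. standard Gaussian, σ > 0, 1 ≤ s < d, a > 0, and let θ ∈ ℝ^d have exactly s nonzero components, each satisfying |θ_j| ≥ a. Define X_j = θ_j + σξ_j, t = a/2 + (σ²/a)·log(d/s - 1), the selector η̂_j = 1{|X_j| ≥ t}, and η_j = 1{θ_j ≠ 0}. Then (1/s)·E[Σ_{j=1}^d |η̂_j - η_j|] ≤ 2Ψ(d,s,a), where Ψ(d,s,a) = (d/s-1)·Φ(-a/(2σ) - (σ/a)·log(d/s-1)) + Φ(-max(a/(2σ) - (σ/a)·log(d/s-1), 0)). -/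

import Mathlib

open MeasureTheory ProbabilityTheory

/-- The standard Gaussian cumulative distribution function. -/
noncomputable def Phi (x : ℝ) : ℝ :=
  (Real.sqrt (2 * Real.pi))⁻¹ * ∫ u in Set.Iic x, Real.exp (-u ^ 2 / 2)

/-- Minimax risk expression for the two-sided sparsity class `Θ_d(s,a)`. -/
noncomputable def Psi (d s : ℕ) (a σ : ℝ) : ℝ :=
  ((d : ℝ) / s - 1) * Phi (-(a / (2 * σ)) - (σ / a) * Real.log ((d : ℝ) / s - 1))
    + Phi (-(max (a / (2 * σ) - (σ / a) * Real.log ((d : ℝ) / s - 1)) 0))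

/-- The law of the observation vector `X = θ + σξ` with i.i.d. standard Gaussian `ξ_j`:
the product of Gaussian measures `N(θ_j, σ²)`. -/
noncomputable def Pmodel (d : ℕ) (σ : ℝ) (θ : Fin d → ℝ) : Measure (Fin d → ℝ) :=
  Measure.pi fun j => gaussianReal (θ j) (Real.toNNReal (σ ^ 2))

/-! The expected number of selection errors is the sum over coordinates of the probability
of misclassifying that coordinate, which only involves `X_j ~ N(θ_j, σ²)`. A null coordinate is
selected when `|σ ξ_j| ≥ t`; a signal coordinate is dropped only when
`|σ ξ_j| > |θ_j| - t ≥ a - t`. Both are two-sided standard Gaussian tails, of probability at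
most `2 Φ(-t/σ)` and `2 Φ(-((a - t)/σ)₊)` (the latter is trivial when `a < t`, as `2 Φ(0) = 1`).
Since `t/σ = a/(2σ) + (σ/a) log(d/s - 1)` and `(a - t)/σ = a/(2σ) - (σ/a) log(d/s - 1)`,
summing over the `s` signal and `d - s` null coordinates and dividing by `s` gives `2 Ψ(d,s,a)`.
-/

open Real Set

lemma Phi_nonneg (x : ℝ) : 0 ≤ Phi x :=
  mul_nonneg (inv_nonneg.2 (sqrt_nonneg _)) (integral_nonneg fun _ => (exp_pos _).le)

lemma gaussianReal_zero_one_Iic (x : ℝ) : gaussianReal 0 1 (Iic x) = ENNReal.ofReal (Phi x) := by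
  rw [gaussianReal_apply_eq_integral 0 one_ne_zero, Phi, ← integral_const_mul]
  congr 1
  refine setIntegral_congr_fun measurableSet_Iic fun u _ => ?_
  simp [gaussianPDFReal]

lemma gaussianReal_zero_one_Ici (x : ℝ) : gaussianReal 0 1 (Ici x) = ENNReal.ofReal (Phi (-x)) := by
  have h := gaussianReal_map_neg (μ := 0) (v := 1)
  rw [neg_zero] at h
  rw [← gaussianReal_zero_one_Iic, ← h, Measure.map_apply measurable_neg measurableSet_Iic]
  congr 1
  ext y
  simp

lemma gaussianReal_zero_one_le_abs_le (c : ℝ) :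
    gaussianReal 0 1 {x | c ≤ |x|} ≤ ENNReal.ofReal (2 * Phi (-c)) := calc
  gaussianReal 0 1 {x | c ≤ |x|} ≤ gaussianReal 0 1 (Iic (-c) ∪ Ici c) :=
    measure_mono fun x (hx : c ≤ |x|) => le_abs'.1 hx
  _ ≤ gaussianReal 0 1 (Iic (-c)) + gaussianReal 0 1 (Ici c) := measure_union_le _ _
  _ = ENNReal.ofReal (2 * Phi (-c)) := by
    rw [gaussianReal_zero_one_Iic, gaussianReal_zero_one_Ici, ← ENNReal.ofReal_add (Phi_nonneg _) (Phi_nonneg _),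
      two_mul]

lemma one_le_two_mul_Phi_zero : 1 ≤ 2 * Phi 0 := by
  have h := gaussianReal_zero_one_le_abs_le 0
  simp only [abs_nonneg, ofPred_true, measure_univ, neg_zero] at h
  exact ENNReal.one_le_ofReal.1 h

lemma gaussianReal_eq_map_affine (σ m : ℝ) :
    gaussianReal m (σ ^ 2).toNNReal = (gaussianReal 0 1).map (fun x => σ * x + m) := by
  change _ = (gaussianReal 0 1).map ((· + m) ∘ (σ * ·))
  rw [← Measure.map_map (measurable_add_const m) (measurable_const_mul σ),
    gaussianReal_map_const_mul, gaussianReal_map_add_const]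
  congr 1
  · ring
  · ext; simp [Real.coe_toNNReal _ (sq_nonneg σ)]

lemma gaussianReal_real_le_two_mul_Phi {σ : ℝ} (hσ : 0 < σ) (m c : ℝ) {S : Set ℝ}
    (hS : ∀ y ∈ S, σ * c ≤ |y - m|) :
    (gaussianReal m (σ ^ 2).toNNReal).real S ≤ 2 * Phi (-c) := by
  have hpre : (fun x => σ * x + m) ⁻¹' {y | σ * c ≤ |y - m|} = {x | c ≤ |x|} := by
    ext x
    simp [abs_mul, abs_of_pos hσ, mul_le_mul_iff_right₀ hσ]
  calc _ ≤ (gaussianReal m (σ ^ 2).toNNReal).real {y | σ * c ≤ |y - m|} := measureReal_mono hS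
    _ ≤ 2 * Phi (-c) := by
      refine ENNReal.toReal_le_of_le_ofReal (by linarith [Phi_nonneg (-c)]) ?_
      rw [gaussianReal_eq_map_affine, Measure.map_apply (by fun_prop)
        (measurableSet_le measurable_const (by fun_prop)), hpre]
      exact gaussianReal_zero_one_le_abs_le c

lemma gaussianReal_real_le_abs_le {σ : ℝ} (hσ : 0 < σ) (t : ℝ) :
    (gaussianReal 0 (σ ^ 2).toNNReal).real {y | t ≤ |y|} ≤ 2 * Phi (-(t / σ)) :=
  gaussianReal_real_le_two_mul_Phi hσ 0 _ fun y (hy : t ≤ |y|) => by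
    rwa [mul_div_cancel₀ t hσ.ne', sub_zero]

lemma gaussianReal_real_abs_lt_le {σ a m : ℝ} (hσ : 0 < σ) (ha : a ≤ |m|) (t : ℝ) :
    (gaussianReal m (σ ^ 2).toNNReal).real {y | |y| < t} ≤ 2 * Phi (-max ((a - t) / σ) 0) := by
  rcases le_total 0 ((a - t) / σ) with h | h
  · rw [max_eq_left h]
    refine gaussianReal_real_le_two_mul_Phi hσ m _ fun y (hy : |y| < t) => ?_
    rw [mul_div_cancel₀ _ hσ.ne']
    linarith [abs_sub_abs_le_abs_sub m y, abs_sub_comm y m]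
  · rw [max_eq_right h, neg_zero]
    exact measureReal_le_one.trans one_le_two_mul_Phi_zero

lemma abs_ite_sub_ite_eq_indicator (t m : ℝ) :
    (fun y : ℝ => |(if t ≤ |y| then (1 : ℝ) else 0) - (if m ≠ 0 then 1 else 0)|) =
      (if m ≠ 0 then {y : ℝ | |y| < t} else {y | t ≤ |y|}).indicator 1 := by
  ext y
  by_cases hm : m = 0 <;> by_cases hy : t ≤ |y| <;> simp [hm, hy, indicator]

lemma integrable_abs_ite_sub_ite (μ : Measure ℝ) [IsFiniteMeasure μ] (t m : ℝ) :
    Integrable (fun y : ℝ => |(if t ≤ |y| then (1 : ℝ) else 0) - (if m ≠ 0 then 1 else 0)|) μ := by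
  rw [abs_ite_sub_ite_eq_indicator]
  exact (integrable_const 1).indicator (by split_ifs <;> measurability)

lemma integral_abs_ite_sub_ite_le {σ a m : ℝ} (hσ : 0 < σ) (ha : m ≠ 0 → a ≤ |m|) (t : ℝ) :
    ∫ y, |(if t ≤ |y| then (1 : ℝ) else 0) - (if m ≠ 0 then 1 else 0)|
        ∂gaussianReal m (σ ^ 2).toNNReal
      ≤ 2 * if m ≠ 0 then Phi (-max ((a - t) / σ) 0) else Phi (-(t / σ)) := by
  rw [abs_ite_sub_ite_eq_indicator, integral_indicator_one (by split_ifs <;> measurability)]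
  split_ifs with hm
  · exact gaussianReal_real_abs_lt_le hσ (ha hm) t
  · rw [not_not.1 hm]
    exact gaussianReal_real_le_abs_le hσ t

lemma integral_pi_sum_comp_eval {ι : Type*} [Fintype ι] {X : ι → Type*}
    [∀ i, MeasurableSpace (X i)] {μ : ∀ i, Measure (X i)} [∀ i, IsProbabilityMeasure (μ i)]
    {f : ∀ i, X i → ℝ} (hf : ∀ i, Integrable (f i) (μ i)) :
    ∫ x, ∑ i, f i (x i) ∂Measure.pi μ = ∑ i, ∫ y, f i y ∂μ i := by
  rw [integral_finsetSum _ fun i _ => integrable_comp_eval (hf i)]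
  exact Finset.sum_congr rfl fun i _ => integral_comp_eval (hf i).aestronglyMeasurable

lemma Fintype.sum_ite_const {ι R : Type*} [Fintype ι] [CommRing R] (p : ι → Prop)
    [DecidablePred p] (b c : R) :
    ∑ i, (if p i then b else c) =
      (Finset.univ.filter p).card * b + (Fintype.card ι - (Finset.univ.filter p).card) * c := by
  rw [Finset.sum_ite, Finset.sum_const, Finset.sum_const, nsmul_eq_mul, nsmul_eq_mul,
    ← Finset.card_univ, ← Finset.card_filter_add_card_filter_not (s := Finset.univ) p]
  push_cast
  ring

theorem risk_bound_two_sided_general (d s : ℕ) (hs : 1 ≤ s) (a σ : ℝ)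
    (hσ : 0 < σ) (θ : Fin d → ℝ)
    (hcard : (Finset.univ.filter fun j => θ j ≠ 0).card = s)
    (hθ : ∀ j, θ j ≠ 0 → a ≤ |θ j|)
    (t : ℝ) (ht : t = a / 2 + σ ^ 2 / a * Real.log ((d : ℝ) / s - 1)) :
    (1 / (s : ℝ)) * ∫ x, (∑ j, |(if t ≤ |x j| then (1 : ℝ) else 0)
        - (if θ j ≠ 0 then (1 : ℝ) else 0)|) ∂(Pmodel d σ θ)
      ≤ 2 * Psi d s a σ := by
  have hnull : -(t / σ) = -(a / (2 * σ)) - σ / a * Real.log ((d : ℝ) / s - 1) := by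
    rw [ht]; field_simp; ring
  have hsignal : (a - t) / σ = a / (2 * σ) - σ / a * Real.log ((d : ℝ) / s - 1) := by
    rw [ht]; field_simp; ring
  have hs0 : (s : ℝ) ≠ 0 := Nat.cast_ne_zero.2 (Nat.one_le_iff_ne_zero.1 hs)
  calc (1 / (s : ℝ)) * ∫ x, (∑ j, |(if t ≤ |x j| then (1 : ℝ) else 0)
        - (if θ j ≠ 0 then (1 : ℝ) else 0)|) ∂(Pmodel d σ θ)
      = 1 / s * ∑ j, ∫ y, |(if t ≤ |y| then (1 : ℝ) else 0) - (if θ j ≠ 0 then 1 else 0)|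
          ∂gaussianReal (θ j) (σ ^ 2).toNNReal := by
        rw [Pmodel, integral_pi_sum_comp_eval fun j => integrable_abs_ite_sub_ite _ t (θ j)]
    _ ≤ 1 / s * ∑ j, 2 * if θ j ≠ 0 then Phi (-max ((a - t) / σ) 0) else Phi (-(t / σ)) := by
        gcongr with j
        exact integral_abs_ite_sub_ite_le hσ (hθ j) t
    _ = 2 * Psi d s a σ := by
        rw [← Finset.mul_sum, Fintype.sum_ite_const, hcard, Fintype.card_fin, hnull, hsignal, Psi]
        field_simp
        ring

theorem risk_bound_two_sided (d s : ℕ) (hs : 1 ≤ s) (hsd : s < d) (a σ : ℝ)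
    (ha : 0 < a) (hσ : 0 < σ) (θ : Fin d → ℝ)
    (hcard : (Finset.univ.filter fun j => θ j ≠ 0).card = s)
    (hθ : ∀ j, θ j ≠ 0 → a ≤ |θ j|)
    (t : ℝ) (ht : t = a / 2 + σ ^ 2 / a * Real.log ((d : ℝ) / s - 1)) :
    (1 / (s : ℝ)) * ∫ x, (∑ j, |(if t ≤ |x j| then (1 : ℝ) else 0)
        - (if θ j ≠ 0 then (1 : ℝ) else 0)|) ∂(Pmodel d σ θ)
      ≤ 2 * Psi d s a σ :=
  risk_bound_two_sided_general d s hs a σ hσ θ hcard hθ t ht
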